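/- Let κ, ρ ∈ (0,1) and q ≥ 0, and set ξ' = (κ + ρ + 2q)/(1−κ). Let S : ℕ → ℝ and d : ℕ → ℝ be sequences with |d(k)| ≤ q for all k, satisfying the recursion S(k+1) = (1−κ)S(k) − (κ+ρ+q)·sgn(S(k)) + d(k), where sgn denotes the real sign function (sgn 0 = 0). Then: (i) if |S(k)| ≤ ξ' then |S(k+1)| ≤ ξ' (the band [−ξ', ξ'] is positively invariant); and (ii) for any initial value S(0) there exists N ∈ ℕ such that |S(k)| ≤ ξ' for all k ≥ N. -/

import Mathlib

/-!
Outside the band the switching gain `κ + ρ + q` dominates the disturbance, so `|S|` drops by at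
least `κ + ρ` per step; inside it, the contraction factor `1 - κ` absorbs the worst case because
`(1 - κ) ξ' = κ + ρ + 2q`. Hence `|S (k+1)| ≤ max (|S k| - (κ + ρ)) ξ'`, and a sequence obeying
this bound falls below `ξ'` after about `(|S 0| - ξ') / (κ + ρ)` steps and never leaves the band.
-/

section DecreaseToLevel

variable {a : ℕ → ℝ} {δ b : ℝ}

lemma le_max_sub_mul_of_forall_succ_le (hδ : 0 ≤ δ) (ha : ∀ k, a (k + 1) ≤ max (a k - δ) b)
    (k : ℕ) : a k ≤ max (a 0 - k * δ) b := by
  induction k with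
  | zero => simp
  | succ k ih =>
    refine (ha k).trans (max_le ?_ (le_max_right _ _))
    push_cast
    rcases le_max_iff.mp ih with h | h
    · exact le_max_of_le_left (by linarith)
    · exact le_max_of_le_right (by linarith)

lemma exists_forall_ge_le_of_forall_succ_le (hδ : 0 < δ)
    (ha : ∀ k, a (k + 1) ≤ max (a k - δ) b) : ∃ N : ℕ, ∀ k ≥ N, a k ≤ b := by
  obtain ⟨N, hN⟩ := exists_nat_ge ((a 0 - b) / δ)
  refine ⟨N, fun k hk => (le_max_sub_mul_of_forall_succ_le hδ.le ha k).trans (max_le ?_ le_rfl)⟩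
  have hNk : (N : ℝ) ≤ k := by exact_mod_cast hk
  rw [div_le_iff₀ hδ] at hN
  nlinarith

end DecreaseToLevel

noncomputable def slidingStep (κ ρ q x e : ℝ) : ℝ :=
  (1 - κ) * x - (κ + ρ + q) * Real.sign x + e

section SlidingStep

variable {κ ρ q ξ x e : ℝ}

lemma abs_sub_add_le_max_of_pos (hκ0 : 0 ≤ κ) (hκ1 : κ < 1) (hρ : 0 ≤ ρ)
    (hξ : (1 - κ) * ξ = κ + ρ + 2 * q) (he : |e| ≤ q) (hx : 0 < x) :
    |(1 - κ) * x - (κ + ρ + q) + e| ≤ max (x - (κ + ρ)) ξ := by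
  obtain ⟨he₁, he₂⟩ := abs_le.mp he
  have hξ0 : 0 ≤ ξ := by
    by_contra! h
    nlinarith
  rcases le_or_gt x ξ with hxξ | hxξ
  · refine le_max_of_le_right (abs_le.mpr ⟨?_, ?_⟩) <;> nlinarith
  · refine le_max_of_le_left (abs_le.mpr ⟨?_, ?_⟩) <;> nlinarith

lemma abs_slidingStep_le_max (hκ0 : 0 ≤ κ) (hκ1 : κ < 1) (hρ : 0 ≤ ρ)
    (hξ : (1 - κ) * ξ = κ + ρ + 2 * q) (he : |e| ≤ q) :
    |slidingStep κ ρ q x e| ≤ max (|x| - (κ + ρ)) ξ := by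
  unfold slidingStep
  rcases lt_trichotomy x 0 with hx | rfl | hx
  · -- the step is odd in `(x, e)`
    have hneg := abs_sub_add_le_max_of_pos hκ0 hκ1 hρ hξ (e := -e) (by rwa [abs_neg])
      (neg_pos.mpr hx)
    rw [Real.sign_of_neg hx, abs_of_neg hx, ← abs_neg]
    convert hneg using 2
    ring
  · have hq : 0 ≤ q := (abs_nonneg e).trans he
    have hξq : q ≤ ξ := by nlinarith
    simpa only [Real.sign_zero, mul_zero, sub_zero, zero_add] using
      le_max_of_le_right (he.trans hξq)
  · rw [Real.sign_of_pos hx, abs_of_pos hx, mul_one]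
    exact abs_sub_add_le_max_of_pos hκ0 hκ1 hρ hξ he hx

end SlidingStep

theorem stmt_12_general (κ ρ q : ℝ) (hκ : κ ∈ Set.Ioo (0 : ℝ) 1) (hρ : ρ ∈ Set.Ioo (0 : ℝ) 1)
    (ξ' : ℝ) (hξ' : ξ' = (κ + ρ + 2 * q) / (1 - κ))
    (S d : ℕ → ℝ) (hd : ∀ k, |d k| ≤ q)
    (hrec : ∀ k, S (k + 1) = (1 - κ) * S k - (κ + ρ + q) * Real.sign (S k) + d k) :
    (∀ k, |S k| ≤ ξ' → |S (k + 1)| ≤ ξ') ∧ (∃ N : ℕ, ∀ k ≥ N, |S k| ≤ ξ') := by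
  obtain ⟨hκ0, hκ1⟩ := hκ
  have hξ : (1 - κ) * ξ' = κ + ρ + 2 * q := by
    rw [hξ']
    field_simp [(sub_pos.mpr hκ1).ne']
  have hstep (k : ℕ) : |S (k + 1)| ≤ max (|S k| - (κ + ρ)) ξ' := by
    rw [hrec k]
    exact abs_slidingStep_le_max hκ0.le hκ1 hρ.1.le hξ (hd k)
  refine ⟨fun k hk => (hstep k).trans (max_le ?_ le_rfl), ?_⟩
  · linarith [hρ.1]
  · exact exists_forall_ge_le_of_forall_succ_le (by linarith [hρ.1]) hstep

/-- ultimate boundedness of the sliding variable (Theorem 5): for the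
recursion `S(k+1) = (1-κ)S(k) - (κ+ρ+q)·sgn(S(k)) + d(k)` with `|d(k)| ≤ q` and
`ξ' = (κ + ρ + 2q)/(1-κ)`: (i) the band `[-ξ', ξ']` is positively invariant, and
(ii) the trajectory eventually enters and stays in the band. -/
theorem stmt_12 (κ ρ q : ℝ) (hκ : κ ∈ Set.Ioo (0 : ℝ) 1) (hρ : ρ ∈ Set.Ioo (0 : ℝ) 1)
    (hq : 0 ≤ q)
    (ξ' : ℝ) (hξ' : ξ' = (κ + ρ + 2 * q) / (1 - κ))
    (S d : ℕ → ℝ) (hd : ∀ k, |d k| ≤ q)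
    (hrec : ∀ k, S (k + 1) = (1 - κ) * S k - (κ + ρ + q) * Real.sign (S k) + d k) :
    (∀ k, |S k| ≤ ξ' → |S (k + 1)| ≤ ξ') ∧ (∃ N : ℕ, ∀ k ≥ N, |S k| ≤ ξ') :=
  stmt_12_general κ ρ q hκ hρ ξ' hξ' S d hd hrec
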